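/- Let X be a pure d-complex, F a sheaf on X, 0 ≤ k ≤ d−2, and suppose F(x) ≠ 0 for all x in X(k) ∪ X(k+1) ∪ X(k+2). Let Q = D(X) be the maximal number of d-faces containing a vertex. If (X,F) β-expands α-small locally minimal k-cocycles and β'-expands α'-small locally minimal (k+1)-cocycles (both for some β,β' > 0), then (X,F) is a (min{α', ((k+1)Q/(d+1))^{-1}·C(d+1,k+2)^{-1}}, α)-cosystolic expander in dimension k: (C1) ‖d_k f‖_ws ≥ ε·dist_ws(f, Z^k) for all f ∈ C^k with ε = min{α', (d+1)/((k+1)Q)·C(d+1,k+2)^{-1}}, and (C2) ‖f‖_ws ≥ α for all f ∈ Z^k \ B^k. -/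

import Mathlib

open Finset

variable {V : Type} [LinearOrder V]

/-- A (finite) simplicial complex: a nonempty collection of finite subsets of the vertex
type `V`, closed under taking subsets. -/
def IsComplex (X : Finset (Finset V)) : Prop :=
  X.Nonempty ∧ ∀ s ∈ X, ∀ t ⊆ s, t ∈ X

/-- The faces of `X` having exactly `j` vertices, i.e. of dimension `j - 1`. -/
def faceSet (X : Finset (Finset V)) (j : ℕ) : Finset (Finset V) :=
  X.filter fun s => s.card = j

/-- `X` is pure of dimension `d`: every face is contained in a face with `d + 1` vertices. -/
def IsPure (X : Finset (Finset V)) (d : ℕ) : Prop :=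
  ∀ s ∈ X, ∃ t ∈ X, s ⊆ t ∧ t.card = d + 1

/-- The canonical weight of a face `x` of a pure `d`-dimensional complex `X`:
`w(x) = C(d+1, |x|)⁻¹ ⬝ |X(d)|⁻¹ ⬝ #{y ∈ X(d) : x ⊆ y}`. -/
noncomputable def wt (X : Finset (Finset V)) (d : ℕ) (x : Finset V) : ℝ :=
  ((d + 1).choose x.card : ℝ)⁻¹ * ((faceSet X (d + 1)).card : ℝ)⁻¹ *
    (((faceSet X (d + 1)).filter fun y => x ⊆ y).card : ℝ)
/-- A sheaf of `R`-modules on the simplicial complex `X`: an `R`-module `Stalk x` for every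
face `x`, and compatible restriction maps along inclusions of faces. -/
structure PSheaf (R : Type) [CommRing R] {V : Type} (X : Finset (Finset V)) where
  Stalk : Finset V → Type
  [stalkAddCommGroup : ∀ x, AddCommGroup (Stalk x)]
  [stalkModule : ∀ x, Module R (Stalk x)]
  res : ∀ {x y : Finset V}, x ∈ X → y ∈ X → x ⊆ y → (Stalk x →ₗ[R] Stalk y)
  res_refl : ∀ {x : Finset V} (hx : x ∈ X) (v : Stalk x),
    res hx hx (Finset.Subset.refl x) v = v
  res_trans : ∀ {x y z : Finset V} (hx : x ∈ X) (hy : y ∈ X) (hz : z ∈ X)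
    (hxy : x ⊆ y) (hyz : y ⊆ z) (v : Stalk x),
    res hy hz hyz (res hx hy hxy v) = res hx hz (hxy.trans hyz) v

attribute [instance] PSheaf.stalkAddCommGroup PSheaf.stalkModule

variable {R : Type} [CommRing R]

/-- The faces of `X` of dimension `k`, i.e. with `k + 1` vertices. -/
def Face (X : Finset (Finset V)) (k : ℕ) : Type :=
  {s : Finset V // s ∈ X ∧ s.card = k + 1}

/-- `k`-cochains with coefficients in the sheaf `S`. -/
abbrev Cochain {X : Finset (Finset V)} (S : PSheaf R X) (k : ℕ) : Type :=
  (x : Face X k) → S.Stalk x.1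
variable {X : Finset (Finset V)}

/-- The simplicial coboundary map (with signs determined by the linear order on the
vertices): `(δ f)(y) = ∑_{v ∈ y} (-1)^{#\{a ∈ y : a < v\}} ⬝ res_{y ← y∖v} f(y ∖ v)`. -/
noncomputable def delta (hX : IsComplex X) (S : PSheaf R X) (k : ℕ) (f : Cochain S k) :
    Cochain S (k + 1) := fun y =>
  ∑ v ∈ y.1.attach,
    ((-1 : R) ^ (y.1.filter (fun a => a < v.1)).card) •
      (S.res (hX.2 y.1 y.2.1 (y.1.erase v.1) (Finset.erase_subset v.1 y.1)) y.2.1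
        (Finset.erase_subset v.1 y.1)
        (f ⟨y.1.erase v.1,
            hX.2 y.1 y.2.1 (y.1.erase v.1) (Finset.erase_subset v.1 y.1),
            by rw [Finset.card_erase_of_mem v.2, y.2.2]; omega⟩))

/-- The coboundary map as a linear map. -/
noncomputable def deltaHom (hX : IsComplex X) (S : PSheaf R X) (k : ℕ) :
    Cochain S k →ₗ[R] Cochain S (k + 1) where
  toFun := delta hX S k
  map_add' f g := by
    funext y
    show delta hX S k (f + g) y = delta hX S k f y + delta hX S k g y
    unfold delta
    rw [← Finset.sum_add_distrib]
    refine Finset.sum_congr rfl fun v _ => ?_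
    rw [← smul_add, ← map_add]
    rfl
  map_smul' c f := by
    funext y
    show delta hX S k (c • f) y = c • delta hX S k f y
    unfold delta
    rw [Finset.smul_sum]
    refine Finset.sum_congr rfl fun v _ => ?_
    rw [smul_comm c]
    congr 1
    rw [← map_smul]
    rfl

/-- The coboundaries: `B⁰ = 0` and `B^{k+1} = range (δ_k)`. -/
noncomputable def Bmod (hX : IsComplex X) (S : PSheaf R X) :
    (k : ℕ) → Submodule R (Cochain S k)
  | 0 => ⊥
  | (k + 1) => LinearMap.range (deltaHom hX S k)

/-- Sheaf cohomology `H^k(X, S) = Z^k / B^k`, computed from the simplicial cochain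
complex with coefficients in `S`. -/
noncomputable abbrev Hcoh (hX : IsComplex X) (S : PSheaf R X) (k : ℕ) : Type :=
  ↥(LinearMap.ker (deltaHom hX S k)) ⧸
    Submodule.comap (LinearMap.ker (deltaHom hX S k)).subtype (Bmod hX S k)

open scoped Classical

/-- The weighted support norm of a `k`-cochain: `‖f‖_ws = ∑_{x ∈ supp f} w(x)`. -/
noncomputable def wsNorm {R : Type} [CommRing R] {X : Finset (Finset V)}
    {S : PSheaf R X} (d : ℕ) {k : ℕ} (f : Cochain S k) : ℝ :=
  ∑ x ∈ (faceSet X (k + 1)).attach,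
    if f ⟨x.1, (Finset.mem_filter.mp x.2).1, (Finset.mem_filter.mp x.2).2⟩ ≠ 0
    then wt X d x.1 else 0

/-- `b` is a `k`-coboundary: `B⁰ = 0` and `B^{k+1} = im (δ_k)`. -/
def IsCobound (hX : IsComplex X) {R : Type} [CommRing R] (S : PSheaf R X) :
    (k : ℕ) → Cochain S k → Prop
  | 0, b => b = 0
  | (k + 1), b => ∃ g : Cochain S k, delta hX S k g = b

/-- `f ∈ C^m(X, S)` is locally minimal: for every nonempty face `z` of dimension
`≤ m - 1` and every `(m-1)`-cochain `h` supported on the faces containing `z`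
(these are exactly the cochains of the form `g^z` for `g ∈ C^{m - dim z - 2}(X_z, S_z)`),
`‖f + δ h‖_ws ≥ ‖f‖_ws`. -/
def LocallyMinimal {R : Type} [CommRing R] (hX : IsComplex X) (S : PSheaf R X)
    (d m : ℕ) (f : Cochain S m) : Prop :=
  ∀ z : Finset V, z ∈ X → z.Nonempty → z.card ≤ m →
    ∀ (j : ℕ) (hj : j + 1 = m) (h : Cochain S j),
      (∀ x : Face X j, ¬ z ⊆ x.1 → h x = 0) →
      wsNorm d f ≤
        wsNorm d (f + cast (congrArg (fun t => Cochain S t) hj) (delta hX S j h))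

/-!
Both parts rest on an approximation lemma: every `(j+1)`-cochain `h` can be corrected by a
coboundary into a locally minimal cochain `h + δ g` with `‖h + δ g‖ ≤ ‖h‖` and
`‖g‖ ≤ c ⬝ (‖h‖ - ‖h + δ g‖)`, where `c = (j+1) Q C(d+1, j+2) / (d+1)`. As long as `h` is
not locally minimal, some `g^z` supported on the star of a vertex lowers its norm; the weight
of such a star is at most `(j+1) Q / ((d+1) |X(d)|)`, while every strict decrease of the norm
is at least `C(d+1, j+2)⁻¹ |X(d)|⁻¹`, since all weights of `(j+1)`-faces are natural
multiples of this quantum. So the process terminates, and the bound on `‖g‖` telescopes.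

For (C1) apply this to `h = δ f`: the corrected `δ (f + g)` is a locally minimal cocycle. If
it is `α'`-small, expansion forces it to vanish, so `f + g` is a cocycle at distance
`‖g‖ ≤ c ‖δ f‖` from `f`; otherwise `‖δ f‖ ≥ α' ≥ ε ‖f‖` because `‖f‖ ≤ 1`. For (C2), an
`α`-small cocycle `f`, corrected to the locally minimal cocycle `f + δ g` of no larger norm,
is killed by expansion, so `f = δ (-g)`.
-/

section WeightedNorm

variable {S : PSheaf R X} {d m : ℕ}

lemma wt_nonneg (d : ℕ) (x : Finset V) : 0 ≤ wt X d x := by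
  unfold wt; positivity

lemma wt_pos (hpure : IsPure X d) {x : Finset V} (hx : x ∈ X) : 0 < wt X d x := by
  obtain ⟨t, htX, hxt, htc⟩ := hpure x hx
  have ht : t ∈ faceSet X (d + 1) := mem_filter.mpr ⟨htX, htc⟩
  have hcard : x.card ≤ d + 1 := htc ▸ card_le_card hxt
  have : 0 < ((faceSet X (d + 1)).filter fun y => x ⊆ y).card :=
    card_pos.mpr ⟨t, mem_filter.mpr ⟨ht, hxt⟩⟩
  have : 0 < (d + 1).choose x.card := Nat.choose_pos hcard
  have : 0 < (faceSet X (d + 1)).card := card_pos.mpr ⟨t, ht⟩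
  unfold wt; positivity

noncomputable def cochainSupport (f : Cochain S m) : Finset (Finset V) :=
  (faceSet X (m + 1)).filter fun x => ∃ hx : x ∈ X ∧ x.card = m + 1, f ⟨x, hx⟩ ≠ 0

lemma mem_cochainSupport {f : Cochain S m} {x : Face X m} :
    x.1 ∈ cochainSupport f ↔ f x ≠ 0 :=
  ⟨fun h => by obtain ⟨-, hx, hfx⟩ := mem_filter.mp h; exact hfx,
    fun h => mem_filter.mpr ⟨mem_filter.mpr x.2, x.2, h⟩⟩

lemma cochainSupport_subset_faceSet (f : Cochain S m) :
    cochainSupport f ⊆ faceSet X (m + 1) :=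
  filter_subset _ _

lemma wsNorm_eq_sum_cochainSupport (f : Cochain S m) :
    wsNorm d f = ∑ x ∈ cochainSupport f, wt X d x := by
  rw [cochainSupport, sum_filter, ← sum_attach]
  exact sum_congr rfl fun x _ => if_congr ⟨fun h => ⟨_, h⟩, fun ⟨_, h⟩ => h⟩ rfl rfl

lemma wsNorm_le_sum_of_cochainSupport_subset {f : Cochain S m} {A : Finset (Finset V)}
    (hA : cochainSupport f ⊆ A) : wsNorm d f ≤ ∑ x ∈ A, wt X d x := by
  rw [wsNorm_eq_sum_cochainSupport]
  exact sum_le_sum_of_subset_of_nonneg hA fun x _ _ => wt_nonneg d x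

lemma wsNorm_nonneg (f : Cochain S m) : 0 ≤ wsNorm d f := by
  rw [wsNorm_eq_sum_cochainSupport]
  exact sum_nonneg fun x _ => wt_nonneg d x

lemma cochainSupport_zero : cochainSupport (0 : Cochain S m) = ∅ :=
  filter_false_of_mem fun _ _ ⟨_, h⟩ => h rfl

lemma wsNorm_zero : wsNorm d (0 : Cochain S m) = 0 := by
  rw [wsNorm_eq_sum_cochainSupport, cochainSupport_zero, sum_empty]

lemma wsNorm_neg (f : Cochain S m) : wsNorm d (-f) = wsNorm d f := by
  unfold wsNorm
  exact sum_congr rfl fun x _ => if_congr neg_ne_zero rfl rfl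

lemma wsNorm_add_le (f g : Cochain S m) :
    wsNorm d (f + g) ≤ wsNorm d f + wsNorm d g := by
  have hsupp : cochainSupport (f + g) ⊆ cochainSupport f ∪ cochainSupport g := by
    intro x hx
    obtain ⟨-, hx, hfg⟩ := mem_filter.mp hx
    rw [mem_union, mem_cochainSupport (x := ⟨x, hx⟩), mem_cochainSupport (x := ⟨x, hx⟩)]
    by_contra! h
    exact hfg (show f ⟨x, hx⟩ + g ⟨x, hx⟩ = 0 by rw [h.1, h.2, add_zero])
  rw [wsNorm_eq_sum_cochainSupport f, wsNorm_eq_sum_cochainSupport g, ← sum_union_inter]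
  exact (wsNorm_le_sum_of_cochainSupport_subset hsupp).trans
    (le_add_of_nonneg_right (sum_nonneg fun x _ => wt_nonneg d x))

lemma eq_zero_of_wsNorm_eq_zero (hpure : IsPure X d) {f : Cochain S m}
    (h : wsNorm d f = 0) : f = 0 := by
  funext x
  by_contra hfx
  rw [wsNorm_eq_sum_cochainSupport, sum_eq_zero_iff_of_nonneg fun y _ => wt_nonneg d y] at h
  exact (wt_pos hpure x.2.1).ne' (h x.1 (mem_cochainSupport.mpr hfx))

end WeightedNorm

section Coboundary

variable (hX : IsComplex X) (S : PSheaf R X)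

lemma delta_add (j : ℕ) (f g : Cochain S j) :
    delta hX S j (f + g) = delta hX S j f + delta hX S j g :=
  (deltaHom hX S j).map_add f g

lemma delta_zero (j : ℕ) : delta hX S j (0 : Cochain S j) = 0 :=
  (deltaHom hX S j).map_zero

lemma delta_neg (j : ℕ) (f : Cochain S j) : delta hX S j (-f) = -delta hX S j f :=
  (deltaHom hX S j).map_neg f

/-- The exponent of the sign with which `f (z ∖ {a, b})` enters `δ (δ f) z` when `a` is
removed first. -/
def removalSign (z : Finset V) (a b : V) : ℕ :=
  (z.filter (· < a)).card + ((z.erase a).filter (· < b)).card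

lemma removalSign_swap {z : Finset V} {a b : V} (ha : a ∈ z) (hab : a < b) :
    removalSign z b a = removalSign z a b + 1 := by
  have h₁ : (z.erase a).filter (· < b) = (z.filter (· < b)).erase a := by
    ext c; simp only [mem_erase, mem_filter]; tauto
  have h₂ : (z.erase b).filter (· < a) = z.filter (· < a) := by
    ext c
    simp only [mem_erase, mem_filter]
    exact ⟨fun ⟨⟨_, hc⟩, h⟩ => ⟨hc, h⟩,
      fun ⟨hc, h⟩ => ⟨⟨(h.trans hab).ne, hc⟩, h⟩⟩
  have ha' : a ∈ z.filter (· < b) := mem_filter.mpr ⟨ha, hab⟩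
  have := card_pos.mpr ⟨a, ha'⟩
  rw [removalSign, removalSign, h₁, h₂, card_erase_of_mem ha']
  omega

/-- The summand of `δ (δ f) z` indexed by the ordered pair of removed vertices. -/
noncomputable def deltaDeltaTerm (j : ℕ) (f : Cochain S j) {z : Finset V} (hzX : z ∈ X)
    (hzc : z.card = j + 1 + 1 + 1) (p : V × V) : S.Stalk z :=
  if hp : p.1 ∈ z ∧ p.2 ∈ z ∧ p.2 ≠ p.1 then
    ((-1 : R) ^ removalSign z p.1 p.2) •
      S.res (hX.2 z hzX _ ((erase_subset _ _).trans (erase_subset _ _))) hzX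
        ((erase_subset _ _).trans (erase_subset _ _))
        (f ⟨(z.erase p.1).erase p.2, hX.2 z hzX _ ((erase_subset _ _).trans (erase_subset _ _)),
          by rw [card_erase_of_mem (mem_erase.mpr ⟨hp.2.2, hp.2.1⟩), card_erase_of_mem hp.1,
            hzc]; rfl⟩)
  else 0

lemma deltaDeltaTerm_diag (j : ℕ) (f : Cochain S j) {z : Finset V} (hzX : z ∈ X)
    (hzc : z.card = j + 1 + 1 + 1) (a : V) : deltaDeltaTerm hX S j f hzX hzc (a, a) = 0 :=
  dif_neg fun h => h.2.2 rfl

lemma deltaDeltaTerm_swap (j : ℕ) (f : Cochain S j) {z : Finset V} (hzX : z ∈ X)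
    (hzc : z.card = j + 1 + 1 + 1) (a b : V) :
    deltaDeltaTerm hX S j f hzX hzc (a, b) + deltaDeltaTerm hX S j f hzX hzc (b, a) = 0 := by
  by_cases hmem : a ∈ z ∧ b ∈ z ∧ b ≠ a
  · obtain ⟨ha, hb, hba⟩ := hmem
    rw [deltaDeltaTerm, deltaDeltaTerm, dif_pos ⟨ha, hb, hba⟩, dif_pos ⟨hb, ha, hba.symm⟩]
    have hface : ∀ {s t : Finset V} (hst : s = t) {hs hs' hsz},
        S.res hs hzX hsz (f ⟨s, hs'⟩) =
          S.res (hst ▸ hs) hzX (hst ▸ hsz) (f ⟨t, hst ▸ hs'⟩) := by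
      rintro s t rfl; intros; rfl
    rw [hface (erase_right_comm (s := z) (a := b) (b := a)), ← add_smul]
    rcases hba.lt_or_gt with h | h
    · rw [removalSign_swap hb h, pow_succ, mul_neg_one, neg_add_cancel, zero_smul]
    · rw [removalSign_swap ha h, pow_succ, mul_neg_one, add_neg_cancel, zero_smul]
  · rw [deltaDeltaTerm, deltaDeltaTerm, dif_neg hmem, dif_neg (by tauto), add_zero]

lemma delta_delta (j : ℕ) (f : Cochain S j) : delta hX S (j + 1) (delta hX S j f) = 0 := by
  funext ⟨z, hzX, hzc⟩
  have hsum : delta hX S (j + 1) (delta hX S j f) ⟨z, hzX, hzc⟩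
      = ∑ p ∈ z ×ˢ z, deltaDeltaTerm hX S j f hzX hzc p := by
    rw [sum_product, ← sum_attach z]
    simp only [delta]
    refine sum_congr rfl fun a _ => ?_
    rw [← sum_erase z (deltaDeltaTerm_diag hX S j f hzX hzc a.1), ← sum_attach (z.erase a.1),
      map_sum, smul_sum]
    refine sum_congr rfl fun b _ => ?_
    rw [deltaDeltaTerm, dif_pos ⟨a.2, (mem_erase.mp b.2).2, (mem_erase.mp b.2).1⟩,
      map_smul, smul_smul, ← pow_add, S.res_trans]
    rfl
  rw [hsum]
  refine sum_involution (fun p _ => p.swap)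
    (fun p _ => deltaDeltaTerm_swap hX S j f hzX hzc p.1 p.2)
    (fun p _ hp hswap => hp (dif_neg fun h => h.2.2 (congrArg Prod.fst hswap)))
    (fun p hp => mem_product.mpr (mem_product.mp hp).symm) (fun p _ => rfl)

end Coboundary

section Counting

variable {S : PSheaf R X} {d m : ℕ}

noncomputable def weightQuantum (X : Finset (Finset V)) (d m : ℕ) : ℝ :=
  ((d + 1).choose (m + 1) : ℝ)⁻¹ * ((faceSet X (d + 1)).card : ℝ)⁻¹

lemma wt_eq_weightQuantum_mul {x : Finset V} (hx : x ∈ faceSet X (m + 1)) :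
    wt X d x = weightQuantum X d m * ((faceSet X (d + 1)).filter (x ⊆ ·)).card := by
  rw [wt, weightQuantum, (mem_filter.mp hx).2]

lemma sum_card_superfaces (hX : IsComplex X) (j : ℕ) :
    ∑ x ∈ faceSet X j, ((faceSet X (d + 1)).filter (x ⊆ ·)).card
      = (d + 1).choose j * (faceSet X (d + 1)).card := by
  have hbelow : ∀ y ∈ faceSet X (d + 1),
      ((faceSet X j).bipartiteBelow (· ⊆ ·) y).card = (d + 1).choose j := by
    intro y hy
    have : (faceSet X j).bipartiteBelow (· ⊆ ·) y = y.powersetCard j := by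
      ext x
      simp only [bipartiteBelow, faceSet, mem_filter, mem_powersetCard]
      exact ⟨fun ⟨⟨_, hc⟩, hxy⟩ => ⟨hxy, hc⟩,
        fun ⟨hxy, hc⟩ => ⟨⟨hX.2 y (mem_filter.mp hy).1 x hxy, hc⟩, hxy⟩⟩
    rw [this, card_powersetCard, (mem_filter.mp hy).2]
  calc _ = ∑ y ∈ faceSet X (d + 1), ((faceSet X j).bipartiteBelow (· ⊆ ·) y).card :=
        sum_card_bipartiteAbove_eq_sum_card_bipartiteBelow _
    _ = _ := by rw [sum_congr rfl hbelow, sum_const, smul_eq_mul, mul_comm]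

lemma wsNorm_le_one (hX : IsComplex X) (f : Cochain S m) : wsNorm d f ≤ 1 := by
  calc wsNorm d f ≤ ∑ x ∈ faceSet X (m + 1), wt X d x :=
        wsNorm_le_sum_of_cochainSupport_subset (cochainSupport_subset_faceSet f)
    _ = weightQuantum X d m * ((d + 1).choose (m + 1) * (faceSet X (d + 1)).card : ℕ) := by
        rw [← sum_card_superfaces hX, Nat.cast_sum, mul_sum]
        exact sum_congr rfl fun x hx => wt_eq_weightQuantum_mul hx
    _ = (((d + 1).choose (m + 1) : ℝ)⁻¹ * (d + 1).choose (m + 1)) *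
          (((faceSet X (d + 1)).card : ℝ)⁻¹ * (faceSet X (d + 1)).card) := by
        rw [weightQuantum]; push_cast; ring
    _ ≤ 1 := mul_le_one₀ (inv_mul_le_one_of_le₀ le_rfl (by positivity)) (by positivity)
          (inv_mul_le_one_of_le₀ le_rfl (by positivity))

lemma exists_wsNorm_eq_nat_mul (f : Cochain S m) :
    ∃ n : ℕ, wsNorm d f = n * weightQuantum X d m := by
  refine ⟨∑ x ∈ cochainSupport f, ((faceSet X (d + 1)).filter (x ⊆ ·)).card, ?_⟩
  rw [wsNorm_eq_sum_cochainSupport, Nat.cast_sum, sum_mul]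
  exact sum_congr rfl fun x hx =>
    (wt_eq_weightQuantum_mul (cochainSupport_subset_faceSet f hx)).trans (mul_comm _ _)

lemma weightQuantum_le_sub_of_wsNorm_lt {f g : Cochain S m} (h : wsNorm d f < wsNorm d g) :
    weightQuantum X d m ≤ wsNorm d g - wsNorm d f := by
  obtain ⟨n₁, h₁⟩ := exists_wsNorm_eq_nat_mul (d := d) f
  obtain ⟨n₂, h₂⟩ := exists_wsNorm_eq_nat_mul (d := d) g
  rw [h₁, h₂] at h ⊢
  have : (n₁ : ℝ) + 1 ≤ n₂ := by
    exact_mod_cast lt_of_mul_lt_mul_right h (by unfold weightQuantum; positivity)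
  nlinarith

lemma sum_card_superfaces_of_star_le {v : V} {Q : ℕ}
    (hQ : ((faceSet X (d + 1)).filter (v ∈ ·)).card ≤ Q) (j : ℕ) :
    ∑ x ∈ (faceSet X (j + 1)).filter (v ∈ ·), ((faceSet X (d + 1)).filter (x ⊆ ·)).card
      ≤ Q * d.choose j := by
  set star := (faceSet X (j + 1)).filter (v ∈ ·)
  have hbelow : ∀ y ∈ (faceSet X (d + 1)).filter (v ∈ ·),
      (star.bipartiteBelow (· ⊆ ·) y).card ≤ d.choose j := by
    intro y hy
    obtain ⟨hy, hvy⟩ := mem_filter.mp hy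
    calc (star.bipartiteBelow (· ⊆ ·) y).card ≤ ((y.erase v).powersetCard j).card := by
          refine card_le_card_of_injOn (·.erase v) (fun x hx => ?_)
            ((erase_injOn' v).mono fun x hx => (mem_filter.mp (mem_filter.mp hx).1).2)
          obtain ⟨hx, hxy⟩ := mem_filter.mp hx
          obtain ⟨hx, hvx⟩ := mem_filter.mp hx
          rw [mem_coe, mem_powersetCard, card_erase_of_mem hvx, (mem_filter.mp hx).2]
          exact ⟨erase_subset_erase v hxy, rfl⟩
      _ = d.choose j := by rw [card_powersetCard, card_erase_of_mem hvy, (mem_filter.mp hy).2]; rfl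
  calc _ = ∑ y ∈ faceSet X (d + 1), (star.bipartiteBelow (· ⊆ ·) y).card :=
        sum_card_bipartiteAbove_eq_sum_card_bipartiteBelow _
    _ = ∑ y ∈ (faceSet X (d + 1)).filter (v ∈ ·),
          (star.bipartiteBelow (· ⊆ ·) y).card := by
        refine (sum_filter_of_ne fun y _ hy => ?_).symm
        obtain ⟨x, hx⟩ := card_ne_zero.mp hy
        obtain ⟨hx, hxy⟩ := mem_filter.mp hx
        exact hxy (mem_filter.mp hx).2
    _ ≤ ((faceSet X (d + 1)).filter (v ∈ ·)).card • d.choose j :=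
        sum_le_card_nsmul _ _ _ hbelow
    _ ≤ Q * d.choose j := Nat.mul_le_mul_right _ hQ

lemma wsNorm_le_of_eq_zero_off_star (hX : IsComplex X) {Q j : ℕ} (hjd : j ≤ d)
    (hQ : ∀ v : V, ({v} : Finset V) ∈ X →
      ((faceSet X (d + 1)).filter (fun t => v ∈ t)).card ≤ Q)
    {z : Finset V} (hzX : z ∈ X) (hz : z.Nonempty) {h : Cochain S j}
    (hsupp : ∀ x : Face X j, ¬ z ⊆ x.1 → h x = 0) :
    wsNorm d h ≤ (j + 1) * Q / (d + 1) * ((faceSet X (d + 1)).card : ℝ)⁻¹ := by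
  obtain ⟨v, hvz⟩ := hz
  have hsub : cochainSupport h ⊆ (faceSet X (j + 1)).filter (v ∈ ·) := by
    intro x hx
    obtain ⟨hxf, hx, hhx⟩ := mem_filter.mp hx
    exact mem_filter.mpr ⟨hxf, not_not.mp (mt (hsupp ⟨x, hx⟩) hhx) hvz⟩
  have hcount := sum_card_superfaces_of_star_le
    (hQ v (hX.2 z hzX {v} (singleton_subset_iff.mpr hvz))) j
  have hchoose : ((d + 1 : ℕ) : ℝ) * d.choose j = (d + 1).choose (j + 1) * (j + 1 : ℕ) := by
    exact_mod_cast Nat.add_one_mul_choose_eq d j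
  have hC : ((d + 1).choose (j + 1) : ℝ) ≠ 0 := by
    exact_mod_cast (Nat.choose_pos (by omega)).ne'
  calc wsNorm d h ≤ ∑ x ∈ (faceSet X (j + 1)).filter (v ∈ ·), wt X d x :=
        wsNorm_le_sum_of_cochainSupport_subset hsub
    _ = weightQuantum X d j * ∑ x ∈ (faceSet X (j + 1)).filter (v ∈ ·),
          (((faceSet X (d + 1)).filter (x ⊆ ·)).card : ℝ) := by
        rw [mul_sum]
        exact sum_congr rfl fun x hx => wt_eq_weightQuantum_mul (mem_filter.mp hx).1
    _ ≤ weightQuantum X d j * (Q * d.choose j : ℕ) := by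
        gcongr
        · unfold weightQuantum; positivity
        · exact_mod_cast hcount
    _ = (j + 1) * Q / (d + 1) * ((faceSet X (d + 1)).card : ℝ)⁻¹ := by
        unfold weightQuantum
        generalize ((faceSet X (d + 1)).card : ℝ)⁻¹ = μ
        push_cast at hchoose ⊢
        field_simp
        linear_combination μ * Q * hchoose

end Counting

section Approximation

variable (hX : IsComplex X) {S : PSheaf R X} {d j Q : ℕ}
  (hQ : ∀ v : V, ({v} : Finset V) ∈ X →
    ((faceSet X (d + 1)).filter (fun t => v ∈ t)).card ≤ Q)
include hX hQ

lemma exists_wsNorm_add_delta_lt (hjd : j + 1 ≤ d) {h : Cochain S (j + 1)}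
    (hh : ¬ LocallyMinimal hX S d (j + 1) h) :
    ∃ g : Cochain S j, wsNorm d (h + delta hX S j g) < wsNorm d h ∧
      wsNorm d g ≤ (j + 1) * Q * (d + 1).choose (j + 2) / (d + 1) *
        (wsNorm d h - wsNorm d (h + delta hX S j g)) := by
  simp only [LocallyMinimal, not_forall, not_le, exists_prop] at hh
  obtain ⟨z, hzX, hz, -, j', hj', g, hsupp, hlt⟩ := hh
  obtain rfl : j = j' := (Nat.succ_injective hj').symm
  refine ⟨g, hlt, ?_⟩
  have hC : ((d + 1).choose (j + 2) : ℝ) ≠ 0 := by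
    exact_mod_cast (Nat.choose_pos (by omega)).ne'
  calc wsNorm d g ≤ (j + 1) * Q / (d + 1) * ((faceSet X (d + 1)).card : ℝ)⁻¹ :=
        wsNorm_le_of_eq_zero_off_star hX (by omega) hQ hzX hz hsupp
    _ = (j + 1) * Q * (d + 1).choose (j + 2) / (d + 1) * weightQuantum X d (j + 1) := by
        unfold weightQuantum; field_simp
    _ ≤ _ := by
        gcongr
        exact weightQuantum_le_sub_of_wsNorm_lt hlt

theorem exists_locallyMinimal_add_delta (hjd : j + 1 ≤ d) (h : Cochain S (j + 1)) :
    ∃ g : Cochain S j, LocallyMinimal hX S d (j + 1) (h + delta hX S j g) ∧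
      wsNorm d (h + delta hX S j g) ≤ wsNorm d h ∧
      wsNorm d g ≤ (j + 1) * Q * (d + 1).choose (j + 2) / (d + 1) *
        (wsNorm d h - wsNorm d (h + delta hX S j g)) := by
  obtain ⟨n, hn⟩ := exists_wsNorm_eq_nat_mul (d := d) h
  induction n using Nat.strong_induction_on generalizing h with
  | _ n ih =>
    by_cases hmin : LocallyMinimal hX S d (j + 1) h
    · exact ⟨0, by simpa [delta_zero] using hmin, by simp [delta_zero],
        by simp [delta_zero, wsNorm_zero]⟩
    obtain ⟨g₁, hlt₁, hg₁⟩ := exists_wsNorm_add_delta_lt hX hQ hjd hmin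
    obtain ⟨n₁, hn₁⟩ := exists_wsNorm_eq_nat_mul (d := d) (h + delta hX S j g₁)
    have hn₁n : n₁ < n := by
      rw [hn, hn₁] at hlt₁
      exact_mod_cast lt_of_mul_lt_mul_right hlt₁ (by unfold weightQuantum; positivity)
    obtain ⟨g₂, hmin₂, hle₂, hg₂⟩ := ih n₁ hn₁n _ hn₁
    have hsum : h + delta hX S j g₁ + delta hX S j g₂ = h + delta hX S j (g₁ + g₂) := by
      rw [delta_add, add_assoc]
    rw [hsum] at hmin₂ hle₂ hg₂
    refine ⟨g₁ + g₂, hmin₂, hle₂.trans hlt₁.le, ?_⟩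
    calc wsNorm d (g₁ + g₂) ≤ wsNorm d g₁ + wsNorm d g₂ := wsNorm_add_le g₁ g₂
      _ ≤ _ := by linarith

end Approximation

lemma locallyMinimal_of_dim_zero (hX : IsComplex X) {S : PSheaf R X} {d : ℕ} (f : Cochain S 0) :
    LocallyMinimal hX S d 0 f :=
  fun _ _ hz hzc => absurd hzc (Nat.not_le_of_lt hz.card_pos)

section CosystolicExpansion

variable (hX : IsComplex X) {S : PSheaf R X} {d : ℕ} (hpure : IsPure X d)
include hX hpure

lemma eq_zero_of_delta_eq_zero_of_expands {m : ℕ} {β : ℝ} (hβ : 0 < β) {f : Cochain S m}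
    (hf : delta hX S m f = 0) (hexp : β * wsNorm d f ≤ wsNorm d (delta hX S m f)) : f = 0 := by
  rw [hf, wsNorm_zero] at hexp
  exact eq_zero_of_wsNorm_eq_zero hpure
    (le_antisymm (nonpos_of_mul_nonpos_right hexp hβ) (wsNorm_nonneg f))

theorem exists_delta_eq_zero_mul_wsNorm_sub_le {k Q : ℕ} (hk : k + 1 ≤ d)
    (hQ : ∀ v : V, ({v} : Finset V) ∈ X →
      ((faceSet X (d + 1)).filter (fun t => v ∈ t)).card ≤ Q)
    {α' β' : ℝ} (hβ' : 0 < β')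
    (hexp' : ∀ f : Cochain S (k + 1), delta hX S (k + 1) f = 0 →
      LocallyMinimal hX S d (k + 1) f → wsNorm d f < α' →
      β' * wsNorm d f ≤ wsNorm d (delta hX S (k + 1) f))
    (f : Cochain S k) :
    ∃ g : Cochain S k, delta hX S k g = 0 ∧
      min α' ((d + 1 : ℝ) / ((k + 1 : ℝ) * (Q : ℝ) * ((d + 1).choose (k + 2) : ℝ)))
        * wsNorm d (f - g) ≤ wsNorm d (delta hX S k f) := by
  set c : ℝ := (k + 1) * Q * (d + 1).choose (k + 2) / (d + 1)
  set ε := min α' ((d + 1 : ℝ) / ((k + 1 : ℝ) * (Q : ℝ) * ((d + 1).choose (k + 2) : ℝ)))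
  by_cases hε : ε ≤ 0
  · exact ⟨0, delta_zero hX S k,
      (mul_nonpos_of_nonpos_of_nonneg hε (wsNorm_nonneg _)).trans (wsNorm_nonneg _)⟩
  push Not at hε
  obtain ⟨g, hmin, hle, hg⟩ := exists_locallyMinimal_add_delta hX hQ hk (delta hX S k f)
  rw [← delta_add] at hmin hle hg
  by_cases hsmall : wsNorm d (delta hX S k (f + g)) < α'
  · have hcoc := delta_delta hX S k (f + g)
    have hzero : delta hX S k (f + g) = 0 :=
      eq_zero_of_delta_eq_zero_of_expands hX hpure hβ' hcoc (hexp' _ hcoc hmin hsmall)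
    rw [hzero, wsNorm_zero, sub_zero] at hg
    refine ⟨f + g, hzero, ?_⟩
    have hεc : ε * c ≤ 1 := by
      have hc : 0 ≤ c := by positivity
      calc ε * c ≤ c⁻¹ * c := by
            gcongr
            rw [inv_div]
            exact min_le_right _ _
        _ ≤ 1 := inv_mul_le_one_of_le₀ le_rfl hc
    calc ε * wsNorm d (f - (f + g)) = ε * wsNorm d g := by rw [sub_add_cancel_left, wsNorm_neg]
      _ ≤ ε * (c * wsNorm d (delta hX S k f)) := by gcongr
      _ = ε * c * wsNorm d (delta hX S k f) := (mul_assoc _ _ _).symm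
      _ ≤ wsNorm d (delta hX S k f) := mul_le_of_le_one_left (wsNorm_nonneg _) hεc
  · refine ⟨0, delta_zero hX S k, ?_⟩
    calc ε * wsNorm d (f - 0) ≤ α' * 1 :=
          mul_le_mul (min_le_left _ _) (wsNorm_le_one hX _) (wsNorm_nonneg _)
            (hε.le.trans (min_le_left _ _))
      _ ≤ wsNorm d (delta hX S k (f + g)) := by linarith
      _ ≤ wsNorm d (delta hX S k f) := hle

theorem isCobound_of_wsNorm_lt {k Q : ℕ} (hk : k ≤ d)
    (hQ : ∀ v : V, ({v} : Finset V) ∈ X →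
      ((faceSet X (d + 1)).filter (fun t => v ∈ t)).card ≤ Q)
    {α β : ℝ} (hβ : 0 < β)
    (hexp : ∀ f : Cochain S k, delta hX S k f = 0 →
      LocallyMinimal hX S d k f → wsNorm d f < α →
      β * wsNorm d f ≤ wsNorm d (delta hX S k f))
    {f : Cochain S k} (hf : delta hX S k f = 0) (hsmall : wsNorm d f < α) :
    IsCobound hX S k f := by
  cases k with
  | zero =>
    exact eq_zero_of_delta_eq_zero_of_expands hX hpure hβ hf
      (hexp f hf (locallyMinimal_of_dim_zero hX f) hsmall)
  | succ j =>
    obtain ⟨g, hmin, hle, -⟩ := exists_locallyMinimal_add_delta hX hQ hk f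
    have hcoc : delta hX S (j + 1) (f + delta hX S j g) = 0 := by
      rw [delta_add, hf, delta_delta, add_zero]
    have hzero := eq_zero_of_delta_eq_zero_of_expands hX hpure hβ hcoc
      (hexp _ hcoc hmin (hle.trans_lt hsmall))
    exact ⟨-g, by rw [delta_neg]; exact neg_eq_of_add_eq_zero_left hzero⟩

end CosystolicExpansion

theorem cosystolic_expansion_of_small_expansion_general {R : Type} [CommRing R]
    (X : Finset (Finset V)) (d k : ℕ) (hX : IsComplex X) (hpure : IsPure X d)
    (hk : k + 2 ≤ d) (S : PSheaf R X)
    (Q : ℕ)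
    (hQ : ∀ v : V, ({v} : Finset V) ∈ X →
      ((faceSet X (d + 1)).filter (fun t => v ∈ t)).card ≤ Q)
    (α β α' β' : ℝ) (hβ : 0 < β) (hβ' : 0 < β')
    (hexp : ∀ f : Cochain S k, delta hX S k f = 0 →
      LocallyMinimal hX S d k f → wsNorm d f < α →
      β * wsNorm d f ≤ wsNorm d (delta hX S k f))
    (hexp' : ∀ f : Cochain S (k + 1), delta hX S (k + 1) f = 0 →
      LocallyMinimal hX S d (k + 1) f → wsNorm d f < α' →
      β' * wsNorm d f ≤ wsNorm d (delta hX S (k + 1) f)) :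
    (∀ f : Cochain S k, ∃ g : Cochain S k, delta hX S k g = 0 ∧
      min α' ((d + 1 : ℝ) / ((k + 1 : ℝ) * (Q : ℝ) * ((d + 1).choose (k + 2) : ℝ)))
        * wsNorm d (f - g) ≤ wsNorm d (delta hX S k f)) ∧
    (∀ f : Cochain S k, delta hX S k f = 0 → ¬ IsCobound hX S k f →
      α ≤ wsNorm d f) :=
  ⟨exists_delta_eq_zero_mul_wsNorm_sub_le hX hpure (by omega) hQ hβ' hexp',
    fun _ hf hnb => not_lt.mp fun hsmall =>
      hnb (isCobound_of_wsNorm_lt hX hpure (by omega) hQ hβ hexp hf hsmall)⟩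

/-- Let `(X, S)` be a sheaved pure `d`-complex, `0 ≤ k ≤ d - 2`, with
`S` nonvanishing on `X(k) ∪ X(k+1) ∪ X(k+2)`, and let `Q ≥ D(X)` bound the number of
`d`-faces containing any vertex.  If `(X, S)` `β`-expands `α`-small locally minimal
`k`-cocycles and `β'`-expands `α'`-small locally minimal `(k+1)`-cocycles (`β, β' > 0`),
then `(X, S)` is a `(min{α', (d+1)/((k+1)Q) ⬝ C(d+1,k+2)⁻¹}, α)`-cosystolic expander in
dimension `k`: (C1) `‖δ_k f‖_ws ≥ ε ⬝ dist_ws(f, Z^k)` for every `f ∈ C^k`, and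
(C2) `‖f‖_ws ≥ α` for every `f ∈ Z^k ∖ B^k`. -/
theorem cosystolic_expansion_of_small_expansion {R : Type} [CommRing R]
    (X : Finset (Finset V)) (d k : ℕ) (hX : IsComplex X) (hpure : IsPure X d)
    (hk : k + 2 ≤ d) (S : PSheaf R X)
    (hnt : ∀ j ∈ ({k + 1, k + 2, k + 3} : Finset ℕ), ∀ x ∈ faceSet X j,
      Nontrivial (S.Stalk x))
    (Q : ℕ)
    (hQ : ∀ v : V, ({v} : Finset V) ∈ X →
      ((faceSet X (d + 1)).filter (fun t => v ∈ t)).card ≤ Q)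
    (α β α' β' : ℝ) (hβ : 0 < β) (hβ' : 0 < β')
    (hexp : ∀ f : Cochain S k, delta hX S k f = 0 →
      LocallyMinimal hX S d k f → wsNorm d f < α →
      β * wsNorm d f ≤ wsNorm d (delta hX S k f))
    (hexp' : ∀ f : Cochain S (k + 1), delta hX S (k + 1) f = 0 →
      LocallyMinimal hX S d (k + 1) f → wsNorm d f < α' →
      β' * wsNorm d f ≤ wsNorm d (delta hX S (k + 1) f)) :
    (∀ f : Cochain S k, ∃ g : Cochain S k, delta hX S k g = 0 ∧
      min α' ((d + 1 : ℝ) / ((k + 1 : ℝ) * (Q : ℝ) * ((d + 1).choose (k + 2) : ℝ)))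
        * wsNorm d (f - g) ≤ wsNorm d (delta hX S k f)) ∧
    (∀ f : Cochain S k, delta hX S k f = 0 → ¬ IsCobound hX S k f →
      α ≤ wsNorm d f) :=
  cosystolic_expansion_of_small_expansion_general X d k hX hpure hk S Q hQ α β α' β' hβ hβ' hexp
    hexp'
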